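/- arXiv:1909.11426 — 3 statements merged into one kernel-verified Lean document; each statement's English description precedes it below -/
import Mathlib

section
/- Let F : [0,1]^n → ℝ≥0 be a differentiable DR-submodular function. Then for every x, y ∈ [0,1]^n it holds that F(x ∨ y) ≥ (1 − ‖x‖_∞) F(y), where (x ∨ y)_i = max{x_i, y_i} and ‖x‖_∞ = max_i |x_i|. -/
/-!
Let `s = ‖x‖_∞` and `u = (x ∨ y) - y ≥ 0`; we may assume `0 < s < 1`. Since
`u ≤ s (1 - y)` coordinatewise, the segment from `y` to `y + s⁻¹ u` stays in the box. Along it,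
the derivative of `g t = F (y + t u)` is `⟪∇F (y + t u), u⟫`, which DR-submodularity makes
antitone, so `g` is concave on `[0, s⁻¹]`. Writing `1 = (1 - s) · 0 + s · s⁻¹` gives
`F (x ∨ y) = g 1 ≥ (1 - s) g 0 + s g s⁻¹ ≥ (1 - s) F y`.
-/

open Set

variable {ι : Type*}

/-- DR-submodularity of a differentiable function on `S`, stated for its gradient `gradF`. -/
def IsDRSubmodularOn (S : Set (EuclideanSpace ℝ ι))
    (gradF : EuclideanSpace ℝ ι → EuclideanSpace ℝ ι) : Prop :=
  ∀ x ∈ S, ∀ y ∈ S, (∀ i, y i ≤ x i) → ∀ i, gradF x i ≤ gradF y i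

theorem EuclideanSpace.inner_le_inner_of_le [Fintype ι] {a b u : EuclideanSpace ℝ ι}
    (hab : ∀ i, a i ≤ b i) (hu : ∀ i, 0 ≤ u i) : inner ℝ a u ≤ inner ℝ b u := by
  simp only [PiLp.inner_apply, RCLike.inner_apply, conj_trivial]
  exact Finset.sum_le_sum fun i _ => mul_le_mul_of_nonneg_left (hab i) (hu i)

theorem ConcaveOn.one_sub_inv_mul_le {g : ℝ → ℝ} {c : ℝ} (hg : ConcaveOn ℝ (Icc 0 c) g)
    (hc : 1 ≤ c) (hgc : 0 ≤ g c) : (1 - c⁻¹) * g 0 ≤ g 1 := by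
  have hc0 : 0 < c := by linarith
  have key := hg.2 (left_mem_Icc.2 hc0.le) (right_mem_Icc.2 hc0.le)
    (sub_nonneg.2 (inv_le_one_of_one_le₀ hc)) (inv_nonneg.2 hc0.le) (sub_add_cancel 1 c⁻¹)
  simp only [smul_eq_mul, mul_zero, zero_add, inv_mul_cancel₀ hc0.ne'] at key
  nlinarith [mul_nonneg (inv_nonneg.2 hc0.le) hgc]

namespace IsDRSubmodularOn

variable [Fintype ι] {F : EuclideanSpace ℝ ι → ℝ}
  {gradF : EuclideanSpace ℝ ι → EuclideanSpace ℝ ι} {S : Set (EuclideanSpace ℝ ι)}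
  {y u : EuclideanSpace ℝ ι}

theorem concaveOn_comp_add_smul (hDR : IsDRSubmodularOn S gradF)
    (hdiff : ∀ x ∈ S, HasGradientWithinAt F (gradF x) S x) (hu : ∀ i, 0 ≤ u i) {D : Set ℝ}
    (hD : Convex ℝ D) (hmaps : MapsTo (fun t : ℝ => y + t • u) D S) :
    ConcaveOn ℝ D (fun t => F (y + t • u)) := by
  have hderiv : ∀ t ∈ D, HasDerivWithinAt (fun t => F (y + t • u))
      (inner ℝ (gradF (y + t • u)) u) D t := by
    intro t ht
    have hline : HasDerivWithinAt (fun t : ℝ => y + t • u) u D t := by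
      simpa using (((hasDerivAt_id t).smul_const u).const_add y).hasDerivWithinAt
    have := (hdiff _ (hmaps ht)).hasFDerivWithinAt.comp_hasDerivWithinAt t hline hmaps
    rwa [InnerProductSpace.toDual_apply_apply] at this
  have hderiv_int : ∀ t ∈ interior D, HasDerivAt (fun t => F (y + t • u))
      (inner ℝ (gradF (y + t • u)) u) t :=
    fun t ht => (hderiv t (interior_subset ht)).hasDerivAt (mem_interior_iff_mem_nhds.1 ht)
  refine AntitoneOn.concaveOn_of_deriv hD (fun t ht => (hderiv t ht).continuousWithinAt)
    (fun t ht => (hderiv_int t ht).differentiableAt.differentiableWithinAt) ?_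
  intro a ha b hb hab
  rw [(hderiv_int a ha).deriv, (hderiv_int b hb).deriv]
  refine EuclideanSpace.inner_le_inner_of_le
    (hDR _ (hmaps (interior_subset hb)) _ (hmaps (interior_subset ha)) fun i => ?_) hu
  simpa using mul_le_mul_of_nonneg_right hab (hu i)

theorem one_sub_inv_mul_le (hDR : IsDRSubmodularOn S gradF)
    (hdiff : ∀ x ∈ S, HasGradientWithinAt F (gradF x) S x) (hS : Convex ℝ S)
    (hF0 : ∀ x ∈ S, 0 ≤ F x) (hu : ∀ i, 0 ≤ u i) (hy : y ∈ S) {c : ℝ} (hc : 1 ≤ c)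
    (hyc : y + c • u ∈ S) : (1 - c⁻¹) * F y ≤ F (y + u) := by
  have hc0 : 0 < c := by linarith
  have hmaps : MapsTo (fun t : ℝ => y + t • u) (Icc 0 c) S := by
    intro t ht
    have := hS.add_smul_mem hy hyc (t := t / c)
      ⟨div_nonneg ht.1 hc0.le, (div_le_one hc0).2 ht.2⟩
    rwa [smul_smul, div_mul_cancel₀ t hc0.ne'] at this
  simpa using (hDR.concaveOn_comp_add_smul hdiff hu (convex_Icc 0 c) hmaps).one_sub_inv_mul_le
    hc (hF0 _ hyc)

end IsDRSubmodularOn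

def unitBox (ι : Type*) : Set (EuclideanSpace ℝ ι) := {x | ∀ i, x i ∈ Icc (0 : ℝ) 1}

theorem convex_unitBox : Convex ℝ (unitBox ι) := by
  intro x hx y hy a b ha hb hab i
  simp only [unitBox, mem_ofPred_eq, mem_Icc, PiLp.add_apply, PiLp.smul_apply, smul_eq_mul]
    at hx hy ⊢
  constructor <;> nlinarith [hx i, hy i]

theorem max_sub_le_mul_one_sub {a b s : ℝ} (ha0 : 0 ≤ a) (has : a ≤ s) (hs : s ≤ 1)
    (hb0 : 0 ≤ b) (hb1 : b ≤ 1) : max a b - b ≤ s * (1 - b) := by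
  rcases le_total a b with hab | hba
  · rw [max_eq_right hab, sub_self]
    nlinarith
  · rw [max_eq_left hba]
    nlinarith

section unitBox

variable {x y : EuclideanSpace ℝ ι} (hx : x ∈ unitBox ι) (hy : y ∈ unitBox ι)
include hx hy

theorem join_mem_unitBox : (WithLp.toLp 2 fun i => max (x i) (y i)) ∈ unitBox ι :=
  fun i => ⟨le_max_of_le_left (hx i).1, max_le (hx i).2 (hy i).2⟩

theorem add_inv_smul_join_sub_mem_unitBox {s : ℝ} (hs0 : 0 < s) (hs1 : s ≤ 1)
    (hxs : ∀ i, x i ≤ s) :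
    y + s⁻¹ • (WithLp.toLp 2 (fun i => max (x i) (y i)) - y) ∈ unitBox ι := by
  intro i
  have hi := max_sub_le_mul_one_sub (hx i).1 (hxs i) hs1 (hy i).1 (hy i).2
  simp only [PiLp.add_apply, PiLp.smul_apply, PiLp.sub_apply, smul_eq_mul, mem_Icc]
  constructor
  · exact add_nonneg (hy i).1 (mul_nonneg (inv_nonneg.2 hs0.le) (by simp))
  · rw [← le_sub_iff_add_le', inv_mul_le_iff₀ hs0]
    linarith

end unitBox

theorem dr_submodular_join_ge_general
    (n : ℕ) (F : EuclideanSpace ℝ (Fin n) → ℝ)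
    (gradF : EuclideanSpace ℝ (Fin n) → EuclideanSpace ℝ (Fin n))
    (box : Set (EuclideanSpace ℝ (Fin n)))
    (hbox : box = {x | ∀ i, x i ∈ Set.Icc (0 : ℝ) 1})
    (hF0 : ∀ x ∈ box, 0 ≤ F x)
    (hdiff : ∀ x ∈ box, HasGradientWithinAt F (gradF x) box x)
    (hDR : ∀ x ∈ box, ∀ y ∈ box, (∀ i, y i ≤ x i) → ∀ i, gradF x i ≤ gradF y i) :
    ∀ x ∈ box, ∀ y ∈ box,
      (1 - ⨆ i, |x i|) * F y
        ≤ F ((WithLp.toLp 2 (fun i => max (x i) (y i)) : EuclideanSpace ℝ (Fin n))) := by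
  subst hbox
  intro x hx y hy
  set s := ⨆ i, |x i|
  set join : EuclideanSpace ℝ (Fin n) := WithLp.toLp 2 fun i => max (x i) (y i)
  have hxs : ∀ i, x i ≤ s := fun i =>
    (le_abs_self _).trans (le_ciSup (f := fun i => |x i|) (Finite.bddAbove (finite_range _)) i)
  obtain hs1 | hs1 := le_or_gt 1 s
  · exact (mul_nonpos_of_nonpos_of_nonneg (by linarith) (hF0 y hy)).trans
      (hF0 _ (join_mem_unitBox hx hy))
  obtain hs0 | hs0 : 0 = s ∨ 0 < s := (Real.iSup_nonneg fun i => abs_nonneg (x i)).eq_or_lt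
  · have hjoin : join = y := by
      ext i
      simp [join, le_antisymm (hs0 ▸ hxs i) (hx i).1, (hy i).1]
    rw [hjoin, ← hs0, sub_zero, one_mul]
  simpa using IsDRSubmodularOn.one_sub_inv_mul_le hDR hdiff convex_unitBox hF0
    (fun i => by simp) hy ((one_le_inv₀ hs0).2 hs1.le)
    (add_inv_smul_join_sub_mem_unitBox hx hy hs0 hs1.le hxs)

/-- For a nonnegative differentiable DR-submodular `F` and all
`x, y ∈ [0,1]^n`, `F (x ∨ y) ≥ (1 - ‖x‖_∞) * F y`. -/
theorem dr_submodular_join_ge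
    (n : ℕ) (hn : 0 < n) (F : EuclideanSpace ℝ (Fin n) → ℝ)
    (gradF : EuclideanSpace ℝ (Fin n) → EuclideanSpace ℝ (Fin n))
    (box : Set (EuclideanSpace ℝ (Fin n)))
    (hbox : box = {x | ∀ i, x i ∈ Set.Icc (0 : ℝ) 1})
    (hF0 : ∀ x ∈ box, 0 ≤ F x)
    (hdiff : ∀ x ∈ box, HasGradientWithinAt F (gradF x) box x)
    (hDR : ∀ x ∈ box, ∀ y ∈ box, (∀ i, y i ≤ x i) → ∀ i, gradF x i ≤ gradF y i) :
    ∀ x ∈ box, ∀ y ∈ box,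
      (1 - ⨆ i, |x i|) * F y
        ≤ F ((WithLp.toLp 2 (fun i => max (x i) (y i)) : EuclideanSpace ℝ (Fin n))) :=
  dr_submodular_join_ge_general n F gradF box hbox hF0 hdiff hDR
end

section
/- Let F : [0,1]^n → [0,1] be a DR-submodular function, M a positive integer, and let L = {0, 2^{−M}, 2·2^{−M}, …, 1}^n. Let m' : [0,1]^n ∩ L → {0,1}^{n×(M+1)} be the lifting map sending x to the binary expansion coordinates (y_{ij}) with x_i = Σ_{j=0}^{M} 2^{−j} y_{ij}. Define f̃ on subsets of the ground set [n]×{0,…,M} by f̃(1_S) = F(m'^{−1}(1_S)) whenever 1_S is in the image of m'. Then f̃ is a submodular set function: for all S ⊂ T and every element k ∉ T (with all relevant indicator vectors in the image of m'), f̃(1_{T ∪ {k}}) − f̃(1_T) ≤ f̃(1_{S ∪ {k}}) − f̃(1_S). -/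
open Finset

/-- Lifting a DR-submodular function `F : [0,1]^n → [0,1]` via dyadic
digits produces a submodular set function on the ground set `[n] × {0,…,M}`. -/
theorem lifted_function_submodular
    (n M : ℕ) (F : (Fin n → ℝ) → ℝ)
    (hrange : ∀ x : Fin n → ℝ, (∀ i, x i ∈ Set.Icc (0 : ℝ) 1) →
        F x ∈ Set.Icc (0 : ℝ) 1)
    (hDR : ∀ x y : Fin n → ℝ,
        (∀ i, x i ∈ Set.Icc (0 : ℝ) 1) → (∀ i, y i ∈ Set.Icc (0 : ℝ) 1) →
        (∀ i, y i ≤ x i) →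
        ∀ (i : Fin n) (α : ℝ), 0 < α →
        (∀ i', ((x + Pi.single i α : Fin n → ℝ)) i' ∈ Set.Icc (0 : ℝ) 1) →
        (∀ i', ((y + Pi.single i α : Fin n → ℝ)) i' ∈ Set.Icc (0 : ℝ) 1) →
        F (x + Pi.single i α) - F x ≤ F (y + Pi.single i α) - F y)
    (decode : Finset (Fin n × Fin (M + 1)) → (Fin n → ℝ))
    (hdecode : ∀ (S : Finset (Fin n × Fin (M + 1))) (i : Fin n),
        decode S i = ∑ j : Fin (M + 1),
          (2 : ℝ) ^ (-(j : ℤ)) * (if (i, j) ∈ S then 1 else 0))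
    (S T : Finset (Fin n × Fin (M + 1))) (k : Fin n × Fin (M + 1))
    (hST : S ⊂ T) (hk : k ∉ T)
    (hTk : ∀ i, decode (insert k T) i ∈ Set.Icc (0 : ℝ) 1) :
    F (decode (insert k T)) - F (decode T) ≤
      F (decode (insert k S)) - F (decode S) := by
  set α : ℝ := (2 : ℝ) ^ (-(k.2 : ℤ)) with hαdef
  have hα : 0 < α := zpow_pos (by norm_num) _
  have hkS : k ∉ S := fun h => hk (hST.1 h)
  -- insert lemma
  have hins : ∀ (A : Finset (Fin n × Fin (M + 1))), k ∉ A →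
      decode (insert k A) = decode A + Pi.single k.1 α := by
    intro A hkA
    funext i
    rw [Pi.add_apply, hdecode, hdecode]
    rcases eq_or_ne i k.1 with h | h
    · subst h
      have key : ∀ j : Fin (M + 1),
          (if (k.1, j) ∈ insert k A then (1:ℝ) else 0) =
          (if (k.1, j) ∈ A then (1:ℝ) else 0) + (if j = k.2 then 1 else 0) := by
        intro j
        rcases eq_or_ne j k.2 with hj | hj
        · subst hj
          simp [hkA]
        · have hne : (k.1, j) ≠ k := by
            intro hc; exact hj (congrArg Prod.snd hc)
          simp [Finset.mem_insert, hne, hj]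
      simp_rw [key, mul_add, Finset.sum_add_distrib, mul_ite, mul_one, mul_zero]
      rw [Finset.sum_ite_eq' Finset.univ k.2 (fun j => (2:ℝ) ^ (-(j : ℤ)))]
      simp [hαdef]
    · rw [Pi.single_eq_of_ne h, add_zero]
      refine Finset.sum_congr rfl fun j _ => ?_
      congr 1
      have hne : (i, j) ≠ k := by
        intro hc; exact h (congrArg Prod.fst hc)
      simp [Finset.mem_insert, hne]
  -- monotonicity
  have hmono : ∀ A B : Finset (Fin n × Fin (M + 1)), A ⊆ B →
      ∀ i, decode A i ≤ decode B i := by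
    intro A B hAB i
    rw [hdecode, hdecode]
    refine Finset.sum_le_sum fun j _ => ?_
    have h01 : (if (i, j) ∈ A then (1:ℝ) else 0) ≤ (if (i, j) ∈ B then 1 else 0) := by
      split_ifs with h1 h2
      · exact le_refl 1
      · exact absurd (hAB h1) h2
      · norm_num
      · exact le_refl 0
    have hp : (0:ℝ) ≤ (2:ℝ) ^ (-(j : ℤ)) := by positivity
    exact mul_le_mul_of_nonneg_left h01 hp
  have hnonneg : ∀ A : Finset (Fin n × Fin (M + 1)), ∀ i, 0 ≤ decode A i := by
    intro A i
    rw [hdecode]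
    refine Finset.sum_nonneg fun j _ => ?_
    positivity
  have hub : ∀ A : Finset (Fin n × Fin (M + 1)), A ⊆ insert k T →
      ∀ i, decode A i ∈ Set.Icc (0:ℝ) 1 :=
    fun A hA i => ⟨hnonneg A i, le_trans (hmono A _ hA i) (hTk i).2⟩
  have hTmem := hub T (Finset.subset_insert _ _)
  have hSmem := hub S (fun x hx => Finset.mem_insert_of_mem (hST.1 hx))
  have hSk := hub (insert k S) (Finset.insert_subset_insert _ hST.1)
  have hle : ∀ i, decode S i ≤ decode T i := hmono S T hST.1
  rw [hins T hk, hins S hkS]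
  exact hDR (decode T) (decode S) hTmem hSmem hle k.1 α hα
    (fun i' => by rw [← hins T hk]; exact hTk i')
    (fun i' => by rw [← hins S hkS]; exact hSk i')
end

section
/- Fix η_1, …, η_L ∈ [0,1] and sequences of vectors in [0,1]^n defined by x_1 = 0 and x_{ℓ+1} = x_ℓ + η_ℓ v_ℓ, where v_ℓ = (x_ℓ ∨ u_ℓ) − x_ℓ for some u_ℓ ∈ [0,1]^n. Then for every ℓ ∈ {1, …, L} and every coordinate i, 1 − (x_{ℓ+1})_i ≥ ∏_{ℓ'=1}^{ℓ} (1 − η_{ℓ'}); in particular 1 − ‖x_{ℓ+1}‖_∞ ≥ ∏_{ℓ'=1}^{ℓ} (1 − η_{ℓ'}). -/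
open Finset

/-- For the Frank–Wolfe-style updates `x_{ℓ+1} = x_ℓ + η_ℓ ((x_ℓ ∨ u_ℓ) − x_ℓ)`
starting at `x_1 = 0`, every coordinate satisfies
`1 − (x_{ℓ+1})_i ≥ ∏_{ℓ'=1}^{ℓ} (1 − η_{ℓ'})`; in particular
`1 − ‖x_{ℓ+1}‖_∞ ≥ ∏_{ℓ'=1}^{ℓ} (1 − η_{ℓ'})`. -/
theorem frank_wolfe_infinity_norm_bound
    (n L : ℕ) (η : ℕ → ℝ) (x u : ℕ → Fin n → ℝ)
    (hη : ∀ ℓ, 1 ≤ ℓ → ℓ ≤ L → η ℓ ∈ Set.Icc (0 : ℝ) 1)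
    (hu : ∀ ℓ, 1 ≤ ℓ → ℓ ≤ L → ∀ i, u ℓ i ∈ Set.Icc (0 : ℝ) 1)
    (hx1 : ∀ i, x 1 i = 0)
    (hupd : ∀ ℓ, 1 ≤ ℓ → ℓ ≤ L → ∀ i,
        x (ℓ + 1) i = x ℓ i + η ℓ * (max (x ℓ i) (u ℓ i) - x ℓ i)) :
    ∀ ℓ, 1 ≤ ℓ → ℓ ≤ L →
      (∀ i, ∏ ℓ' ∈ Finset.Icc 1 ℓ, (1 - η ℓ') ≤ 1 - x (ℓ + 1) i) ∧
      (∀ i, ∏ ℓ' ∈ Finset.Icc 1 ℓ, (1 - η ℓ') ≤ 1 - |x (ℓ + 1) i|) := by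
  have hprodnn : ∀ m, m ≤ L → (0 : ℝ) ≤ ∏ ℓ' ∈ Finset.Icc 1 m, (1 - η ℓ') := by
    intro m hm
    refine Finset.prod_nonneg fun j hj => ?_
    simp only [Finset.mem_Icc] at hj
    have := (hη j hj.1 (hj.2.trans hm)).2
    linarith
  have key : ∀ m, m ≤ L → ∀ i,
      0 ≤ x (m + 1) i ∧ ∏ ℓ' ∈ Finset.Icc 1 m, (1 - η ℓ') ≤ 1 - x (m + 1) i := by
    intro m
    induction m with
    | zero => intro _ i; simp [hx1 i]
    | succ m ih =>
      intro hm i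
      have hmL : m ≤ L := Nat.le_of_succ_le hm
      obtain ⟨h0, h1⟩ := ih hmL i
      have hm1 : 1 ≤ m + 1 := Nat.succ_le_succ (Nat.zero_le m)
      have hηm := hη (m + 1) hm1 hm
      have hum := hu (m + 1) hm1 hm i
      have hupd' := hupd (m + 1) hm1 hm i
      have hx_le : x (m + 1) i ≤ 1 := by
        have := hprodnn m hmL
        linarith
      have hmax_le : max (x (m + 1) i) (u (m + 1) i) ≤ 1 := max_le hx_le hum.2
      have hmax_ge : x (m + 1) i ≤ max (x (m + 1) i) (u (m + 1) i) := le_max_left _ _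
      have hnn : 0 ≤ x (m + 1 + 1) i := by
        rw [hupd']
        have : 0 ≤ η (m + 1) * (max (x (m + 1) i) (u (m + 1) i) - x (m + 1) i) :=
          mul_nonneg hηm.1 (by linarith)
        linarith
      have hstep : (1 - η (m + 1)) * (1 - x (m + 1) i) ≤ 1 - x (m + 1 + 1) i := by
        rw [hupd']
        have h2 : η (m + 1) * (max (x (m + 1) i) (u (m + 1) i) - x (m + 1) i)
            ≤ η (m + 1) * (1 - x (m + 1) i) :=
          mul_le_mul_of_nonneg_left (by linarith) hηm.1
        nlinarith
      refine ⟨hnn, ?_⟩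
      rw [Finset.prod_Icc_succ_top hm1]
      calc (∏ ℓ' ∈ Finset.Icc 1 m, (1 - η ℓ')) * (1 - η (m + 1))
          ≤ (1 - x (m + 1) i) * (1 - η (m + 1)) := by
            apply mul_le_mul_of_nonneg_right h1; linarith [hηm.2]
        _ ≤ 1 - x (m + 1 + 1) i := by rw [mul_comm]; exact hstep
  intro ℓ h1 hL
  refine ⟨fun i => (key ℓ hL i).2, fun i => ?_⟩
  have := key ℓ hL i
  rw [abs_of_nonneg this.1]
  exact this.2
end
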